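/- Let n, m be positive integers, M ∈ ℝ^{n×n}, and let P, Q ∈ ℝ^{n×n} be symmetric positive definite with MᵀPM − P ⪯ −Q and 4·p̄⋆²·Lφ²·λmax(P) + 8·p̄⋆·Lφ·‖PM‖_F ≤ λmin(Q). Let ψ̃ : ℝⁿ → ℝᵐ satisfy ‖ψ̃(x)‖ ≤ φ̄ and ‖ψ̃(x′) − ψ̃(x)‖ ≤ Lφ·‖x′ − x‖ for all x, x′ ∈ ℝⁿ, and let p⋆ ∈ ℝ^{m×n} with operator norm ‖p⋆‖ ≤ p̄⋆. Let x : ℕ → ℝⁿ, e : ℕ → ℝⁿ, p : ℕ → ℝ^{m×n} be sequences with e_{t+1} = M e_t + p_tᵀψ̃(x_t + e_t) − p⋆ᵀψ̃(x_t) for all t, and set eᵖ_t := p_t − p⋆. Assume that for every t, ‖eᵖ_t‖ ≤ (λmin(Q) / (8·φ̄·(λmax(P)·Lφ·p̄⋆ + ‖PM‖_F)))·‖e_t‖ and ‖eᵖ_t‖ ≤ ν̄. Then for every t ∈ ℕ: ‖e_t‖ ≤ √(λmax(P)/λmin(P)) · (1 − λmin(Q)/(2·λmax(P)))^{t/2}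 · ‖e₀‖ + φ̄·ν̄·√(2·λmax(P)² / (λmin(Q)·λmin(P))). -/

import Mathlib

open Matrix MeasureTheory Filter

noncomputable def lamMin {n : ℕ} (A : Matrix (Fin n) (Fin n) ℝ) : ℝ :=
  sInf (spectrum ℝ A)

noncomputable def lamMax {n : ℕ} (A : Matrix (Fin n) (Fin n) ℝ) : ℝ :=
  sSup (spectrum ℝ A)

noncomputable def frobNorm {m n : ℕ} (M : Matrix (Fin m) (Fin n) ℝ) : ℝ :=
  Real.sqrt (∑ i, ∑ j, (M i j) ^ 2)

noncomputable def mulVecE {m n : ℕ} (M : Matrix (Fin m) (Fin n) ℝ)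
    (x : EuclideanSpace ℝ (Fin n)) : EuclideanSpace ℝ (Fin m) :=
  Matrix.toEuclideanLin M x

noncomputable def quadForm {n : ℕ} (P : Matrix (Fin n) (Fin n) ℝ)
    (x : EuclideanSpace ℝ (Fin n)) : ℝ :=
  inner ℝ x (mulVecE P x)

noncomputable def opNorm {m n : ℕ} (p : Matrix (Fin m) (Fin n) ℝ) : ℝ :=
  ‖LinearMap.toContinuousLinearMap (Matrix.toEuclideanLin p)‖

/-!
With `V e = eᵀ P e`, the Lyapunov inequality gives `V (M e) ≤ V e - λmin(Q) ‖e‖²`. The disturbance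
`p_tᵀ ψ(x + e) - p⋆ᵀ ψ(x)` has norm at most `φ̄ ‖eᵖ‖ + p̄⋆ Lφ ‖e‖`. By the gain condition and the cone
condition on `‖eᵖ‖`, the cross and quadratic terms it produces eat at most half of the decrease,
and `‖eᵖ‖ ≤ ν̄` bounds what is left, so `V e_{t+1} ≤ ρ V e_t + λmax(P) φ̄² ν̄²` with
`ρ = 1 - λmin(Q) / (2 λmax(P))`. Iterating, and sandwiching `V` between `λmin(P) ‖e‖²` and
`λmax(P) ‖e‖²`, gives the bound.
-/

section EuclideanMatrix

variable {l m n : ℕ}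

lemma inner_mulVecE_left (A : Matrix (Fin m) (Fin n) ℝ) (x : EuclideanSpace ℝ (Fin n))
    (y : EuclideanSpace ℝ (Fin m)) :
    inner ℝ (mulVecE A x) y = (inner ℝ x (mulVecE Aᵀ y) : ℝ) := by
  rw [mulVecE, mulVecE, ← conjTranspose_eq_transpose_of_trivial,
    toEuclideanLin_conjTranspose_eq_adjoint, LinearMap.adjoint_inner_right]

lemma mulVecE_mulVecE (A : Matrix (Fin l) (Fin m) ℝ) (B : Matrix (Fin m) (Fin n) ℝ)
    (x : EuclideanSpace ℝ (Fin n)) : mulVecE A (mulVecE B x) = mulVecE (A * B) x := by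
  simp [mulVecE]

lemma sub_mulVecE (A B : Matrix (Fin m) (Fin n) ℝ) (x : EuclideanSpace ℝ (Fin n)) :
    mulVecE (A - B) x = mulVecE A x - mulVecE B x := by
  simp [mulVecE]

lemma mulVecE_add (A : Matrix (Fin m) (Fin n) ℝ) (u v : EuclideanSpace ℝ (Fin n)) :
    mulVecE A (u + v) = mulVecE A u + mulVecE A v :=
  map_add (toEuclideanLin A) u v

lemma mulVecE_sub (A : Matrix (Fin m) (Fin n) ℝ) (u v : EuclideanSpace ℝ (Fin n)) :
    mulVecE A (u - v) = mulVecE A u - mulVecE A v :=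
  map_sub (toEuclideanLin A) u v

lemma norm_mulVecE_le_opNorm (A : Matrix (Fin m) (Fin n) ℝ) (x : EuclideanSpace ℝ (Fin n)) :
    ‖mulVecE A x‖ ≤ opNorm A * ‖x‖ :=
  (LinearMap.toContinuousLinearMap (toEuclideanLin A)).le_opNorm x

lemma opNorm_nonneg (A : Matrix (Fin m) (Fin n) ℝ) : 0 ≤ opNorm A :=
  norm_nonneg _

open scoped Matrix.Norms.L2Operator in
lemma opNorm_transpose (A : Matrix (Fin m) (Fin n) ℝ) : opNorm Aᵀ = opNorm A := by
  have h := l2_opNorm_conjTranspose A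
  rwa [conjTranspose_eq_transpose_of_trivial] at h

open scoped Matrix.Norms.Frobenius in
lemma frobNorm_eq_norm (A : Matrix (Fin m) (Fin n) ℝ) : frobNorm A = ‖A‖ := by
  simp [frobenius_norm_def, frobNorm, Real.sqrt_eq_rpow]

lemma frobNorm_nonneg (A : Matrix (Fin m) (Fin n) ℝ) : 0 ≤ frobNorm A :=
  Real.sqrt_nonneg _

open scoped Matrix.Norms.Frobenius in
lemma norm_mulVecE_le_frobNorm (A : Matrix (Fin m) (Fin n) ℝ) (x : EuclideanSpace ℝ (Fin n)) :
    ‖mulVecE A x‖ ≤ frobNorm A * ‖x‖ := by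
  have hx : ‖replicateCol (Fin 1) x.ofLp‖ = ‖x‖ := frobenius_norm_replicateCol _
  have hAx : ‖replicateCol (Fin 1) (A *ᵥ x.ofLp)‖ = ‖mulVecE A x‖ :=
    frobenius_norm_replicateCol _
  rw [frobNorm_eq_norm, ← hx, ← hAx, replicateCol_mulVec]
  exact frobenius_norm_mul _ _

end EuclideanMatrix

section Spectral

variable {n : ℕ} {A : Matrix (Fin n) (Fin n) ℝ}

lemma inner_mulVecE_left_of_isHermitian (hA : A.IsHermitian) (x y : EuclideanSpace ℝ (Fin n)) :
    inner ℝ (mulVecE A x) y = (inner ℝ x (mulVecE A y) : ℝ) := by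
  rw [inner_mulVecE_left, isHermitian_iff_isSymm.mp hA]

lemma quadForm_eq_sum_eigenvalues (hA : A.IsHermitian) (x : EuclideanSpace ℝ (Fin n)) :
    quadForm A x = ∑ i, hA.eigenvalues i * (inner ℝ (hA.eigenvectorBasis i) x : ℝ) ^ 2 := by
  rw [quadForm, ← hA.eigenvectorBasis.sum_inner_mul_inner x (mulVecE A x)]
  refine Finset.sum_congr rfl fun i _ => ?_
  have hv : mulVecE A (hA.eigenvectorBasis i) = hA.eigenvalues i • hA.eigenvectorBasis i := by
    ext j
    simpa [mulVecE] using congrFun (hA.mulVec_eigenvectorBasis i) j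
  rw [← inner_mulVecE_left_of_isHermitian hA, hv, real_inner_smul_left, real_inner_comm x]
  ring

lemma norm_sq_eq_sum_inner_eigenvectorBasis (hA : A.IsHermitian) (x : EuclideanSpace ℝ (Fin n)) :
    ‖x‖ ^ 2 = ∑ i, (inner ℝ (hA.eigenvectorBasis i) x : ℝ) ^ 2 := by
  rw [← real_inner_self_eq_norm_sq, ← hA.eigenvectorBasis.sum_inner_mul_inner x x]
  simp only [real_inner_comm x, sq]

lemma eigenvalues_le_lamMax (hA : A.IsHermitian) (i : Fin n) : hA.eigenvalues i ≤ lamMax A :=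
  le_csSup finite_real_spectrum.bddAbove (hA.eigenvalues_mem_spectrum_real i)

lemma lamMin_le_eigenvalues (hA : A.IsHermitian) (i : Fin n) : lamMin A ≤ hA.eigenvalues i :=
  csInf_le finite_real_spectrum.bddBelow (hA.eigenvalues_mem_spectrum_real i)

lemma quadForm_le_lamMax_mul (hA : A.IsHermitian) (x : EuclideanSpace ℝ (Fin n)) :
    quadForm A x ≤ lamMax A * ‖x‖ ^ 2 := by
  rw [quadForm_eq_sum_eigenvalues hA, norm_sq_eq_sum_inner_eigenvectorBasis hA, Finset.mul_sum]
  gcongr with i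
  exact eigenvalues_le_lamMax hA i

lemma lamMin_mul_le_quadForm (hA : A.IsHermitian) (x : EuclideanSpace ℝ (Fin n)) :
    lamMin A * ‖x‖ ^ 2 ≤ quadForm A x := by
  rw [quadForm_eq_sum_eigenvalues hA, norm_sq_eq_sum_inner_eigenvectorBasis hA, Finset.mul_sum]
  gcongr with i
  exact lamMin_le_eigenvalues hA i

lemma exists_eigenvalues_eq_lamMin (hn : 0 < n) (hA : A.IsHermitian) :
    ∃ i, hA.eigenvalues i = lamMin A := by
  have hne : (spectrum ℝ A).Nonempty := ⟨_, hA.eigenvalues_mem_spectrum_real ⟨0, hn⟩⟩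
  have hmem : lamMin A ∈ spectrum ℝ A := hne.csInf_mem finite_real_spectrum
  rwa [hA.spectrum_real_eq_range_eigenvalues] at hmem

lemma lamMin_pos (hn : 0 < n) (hA : A.PosDef) : 0 < lamMin A := by
  obtain ⟨i, hi⟩ := exists_eigenvalues_eq_lamMin hn hA.isHermitian
  exact hi ▸ hA.eigenvalues_pos i

lemma lamMin_le_lamMax (hn : 0 < n) (hA : A.IsHermitian) : lamMin A ≤ lamMax A := by
  obtain ⟨i, hi⟩ := exists_eigenvalues_eq_lamMin hn hA
  exact hi ▸ eigenvalues_le_lamMax hA i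

end Spectral

section QuadForm

variable {n : ℕ}

lemma quadForm_nonneg {A : Matrix (Fin n) (Fin n) ℝ} (hA : A.PosSemidef)
    (x : EuclideanSpace ℝ (Fin n)) : 0 ≤ quadForm A x := by
  simpa [quadForm, mulVecE, toLpLin_apply, PiLp.inner_apply, dotProduct, mul_comm] using
    (posSemidef_iff_dotProduct_mulVec.mp hA).2 x.ofLp

lemma quadForm_sub (A B : Matrix (Fin n) (Fin n) ℝ) (x : EuclideanSpace ℝ (Fin n)) :
    quadForm (A - B) x = quadForm A x - quadForm B x := by
  rw [quadForm, quadForm, quadForm, sub_mulVecE, inner_sub_right]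

lemma quadForm_transpose_mul_mul (P M : Matrix (Fin n) (Fin n) ℝ)
    (x : EuclideanSpace ℝ (Fin n)) : quadForm (Mᵀ * P * M) x = quadForm P (mulVecE M x) := by
  rw [quadForm, quadForm, mul_assoc, ← mulVecE_mulVecE, ← inner_mulVecE_left, mulVecE_mulVecE]

lemma quadForm_add {P : Matrix (Fin n) (Fin n) ℝ} (hP : P.IsHermitian)
    (a d : EuclideanSpace ℝ (Fin n)) :
    quadForm P (a + d) = quadForm P a + 2 * (inner ℝ (mulVecE P a) d : ℝ) + quadForm P d := by
  rw [quadForm, quadForm, quadForm, mulVecE_add, inner_add_left, inner_add_right,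
    inner_add_right, ← inner_mulVecE_left_of_isHermitian hP a d, real_inner_comm d]
  ring

end QuadForm

lemma small_gain_bound {F lamP lamQ phibar Lphi pbar ε r nubar : ℝ} (hphibar : 0 < phibar)
    (hG : 0 < lamP * Lphi * pbar + F) (hlamP : 0 ≤ lamP) (hε : 0 ≤ ε) (hr : 0 ≤ r)
    (hgain : 4 * pbar ^ 2 * Lphi ^ 2 * lamP + 8 * pbar * Lphi * F ≤ lamQ)
    (hcone : ε ≤ lamQ / (8 * phibar * (lamP * Lphi * pbar + F)) * r) (hεν : ε ≤ nubar) :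
    2 * F * r * (phibar * ε + pbar * Lphi * r) + lamP * (phibar * ε + pbar * Lphi * r) ^ 2
      ≤ lamQ / 2 * r ^ 2 + lamP * phibar ^ 2 * nubar ^ 2 := by
  -- expanded, the left side is `hmixed`'s term, plus `hquad`'s term, plus `hparam`'s left side
  set G := lamP * Lphi * pbar + F
  have hmixed : 2 * phibar * G * (ε * r) ≤ lamQ / 4 * r ^ 2 := by
    have h := mul_le_mul_of_nonneg_left (mul_le_mul_of_nonneg_right hcone hr)
      (by positivity : 0 ≤ 2 * phibar * G)
    calc 2 * phibar * G * (ε * r) ≤ 2 * phibar * G * (lamQ / (8 * phibar * G) * r * r) := h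
      _ = lamQ / 4 * r ^ 2 := by field_simp; ring
  have hquad : (2 * F * (pbar * Lphi) + lamP * (pbar * Lphi) ^ 2) * r ^ 2 ≤ lamQ / 4 * r ^ 2 := by
    gcongr
    linarith
  have hparam : lamP * phibar ^ 2 * ε ^ 2 ≤ lamP * phibar ^ 2 * nubar ^ 2 := by
    gcongr
  linarith

lemma le_pow_mul_add_div_of_le_mul_add {v : ℕ → ℝ} {ρ c : ℝ} (hρ0 : 0 ≤ ρ) (hρ1 : ρ < 1)
    (hc : 0 ≤ c) (h : ∀ t, v (t + 1) ≤ ρ * v t + c) (t : ℕ) :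
    v t ≤ ρ ^ t * v 0 + c / (1 - ρ) := by
  have hfix : ρ * (c / (1 - ρ)) + c = c / (1 - ρ) := by
    field_simp [(sub_pos.mpr hρ1).ne']
    ring
  induction t with
  | zero => simpa using div_nonneg hc (sub_pos.mpr hρ1).le
  | succ t ih =>
    calc v (t + 1) ≤ ρ * (ρ ^ t * v 0 + c / (1 - ρ)) + c :=
          (h t).trans (by gcongr)
      _ = ρ ^ (t + 1) * v 0 + c / (1 - ρ) := by rw [pow_succ]; linear_combination hfix

lemma sqrt_add_le_sqrt_add_sqrt {x y : ℝ} (hx : 0 ≤ x) (hy : 0 ≤ y) : √(x + y) ≤ √x + √y := by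
  rw [Real.sqrt_le_iff]
  refine ⟨by positivity, ?_⟩
  nlinarith [Real.sq_sqrt hx, Real.sq_sqrt hy, Real.sqrt_nonneg x, Real.sqrt_nonneg y]

lemma sqrt_pow_eq_rpow_div_two {ρ : ℝ} (hρ : 0 ≤ ρ) (t : ℕ) : √(ρ ^ t) = ρ ^ ((t : ℝ) / 2) := by
  rw [Real.sqrt_eq_rpow, ← Real.rpow_natCast, ← Real.rpow_mul hρ]
  ring_nf

lemma le_sqrt_div_mul_rpow_mul_add_sqrt {y z a b ρ K : ℝ} (hz : 0 ≤ z) (ha : 0 < a) (hb : 0 ≤ b)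
    (hρ : 0 ≤ ρ) (hK : 0 ≤ K) (t : ℕ) (h : a * y ^ 2 ≤ ρ ^ t * (b * z ^ 2) + K) :
    y ≤ √(b / a) * ρ ^ ((t : ℝ) / 2) * z + √(K / a) := by
  have hy : y ^ 2 ≤ b / a * (ρ ^ t * z ^ 2) + K / a := by
    rw [div_mul_eq_mul_div, ← add_div, le_div_iff₀ ha]
    linarith
  have hsqrt : √(b / a * (ρ ^ t * z ^ 2)) = √(b / a) * ρ ^ ((t : ℝ) / 2) * z := by
    rw [Real.sqrt_mul (by positivity), Real.sqrt_mul (by positivity), Real.sqrt_sq hz,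
      sqrt_pow_eq_rpow_div_two hρ, mul_assoc]
  calc y ≤ |y| := le_abs_self y
    _ = √(y ^ 2) := (Real.sqrt_sq_eq_abs y).symm
    _ ≤ √(b / a * (ρ ^ t * z ^ 2) + K / a) := Real.sqrt_le_sqrt hy
    _ ≤ _ := hsqrt ▸ sqrt_add_le_sqrt_add_sqrt (by positivity) (by positivity)

section Lyapunov

variable {n m : ℕ} {M P Q : Matrix (Fin n) (Fin n) ℝ}

lemma lamMin_le_lamMax_of_lyapunov (hn : 0 < n) (hP : P.PosSemidef) (hQ : Q.IsHermitian)
    (hLyap : (P - Mᵀ * P * M - Q).PosSemidef) : lamMin Q ≤ lamMax P := by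
  set u : EuclideanSpace ℝ (Fin n) := EuclideanSpace.single ⟨0, hn⟩ 1
  have hu : ‖u‖ = 1 := by simp [u]
  have hQu := lamMin_mul_le_quadForm hQ u
  have hPu := quadForm_le_lamMax_mul hP.isHermitian u
  have hMu : 0 ≤ quadForm (Mᵀ * P * M) u := by
    rw [quadForm_transpose_mul_mul]
    exact quadForm_nonneg hP _
  have hLu := quadForm_nonneg hLyap u
  rw [quadForm_sub, quadForm_sub] at hLu
  rw [hu] at hQu hPu
  linarith

lemma quadForm_mulVecE_add_le (hP : P.IsHermitian) (hQ : Q.IsHermitian)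
    (hLyap : (P - Mᵀ * P * M - Q).PosSemidef) (e d : EuclideanSpace ℝ (Fin n)) :
    quadForm P (mulVecE M e + d) ≤ quadForm P e - lamMin Q * ‖e‖ ^ 2
      + 2 * frobNorm (P * M) * ‖e‖ * ‖d‖ + lamMax P * ‖d‖ ^ 2 := by
  have hdecay : quadForm P (mulVecE M e) ≤ quadForm P e - lamMin Q * ‖e‖ ^ 2 := by
    have h := quadForm_nonneg hLyap e
    rw [quadForm_sub, quadForm_sub, quadForm_transpose_mul_mul] at h
    linarith [lamMin_mul_le_quadForm hQ e]
  have hcross : inner ℝ (mulVecE P (mulVecE M e)) d ≤ frobNorm (P * M) * ‖e‖ * ‖d‖ := by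
    rw [mulVecE_mulVecE]
    exact (real_inner_le_norm _ _).trans
      (mul_le_mul_of_nonneg_right (norm_mulVecE_le_frobNorm _ _) (norm_nonneg d))
  rw [quadForm_add hP]
  linarith [quadForm_le_lamMax_mul hP d]

lemma norm_disturbance_le {phibar Lphi pbar : ℝ}
    (ψ : EuclideanSpace ℝ (Fin n) → EuclideanSpace ℝ (Fin m))
    (hbdd : ∀ x, ‖ψ x‖ ≤ phibar) (hlip : ∀ x x', ‖ψ x' - ψ x‖ ≤ Lphi * ‖x' - x‖)
    {pstar : Matrix (Fin m) (Fin n) ℝ} (hpstar : opNorm pstar ≤ pbar)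
    (p : Matrix (Fin m) (Fin n) ℝ) (x e : EuclideanSpace ℝ (Fin n)) :
    ‖mulVecE pᵀ (ψ (x + e)) - mulVecE pstarᵀ (ψ x)‖
      ≤ phibar * opNorm (p - pstar) + pbar * Lphi * ‖e‖ := by
  have hsplit : mulVecE pᵀ (ψ (x + e)) - mulVecE pstarᵀ (ψ x)
      = mulVecE (p - pstar)ᵀ (ψ (x + e)) + mulVecE pstarᵀ (ψ (x + e) - ψ x) := by
    rw [transpose_sub, sub_mulVecE, mulVecE_sub]
    abel
  have hest : ‖mulVecE (p - pstar)ᵀ (ψ (x + e))‖ ≤ opNorm (p - pstar) * phibar := by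
    refine (norm_mulVecE_le_opNorm _ _).trans ?_
    rw [opNorm_transpose]
    exact mul_le_mul_of_nonneg_left (hbdd _) (norm_nonneg _)
  have htrue : ‖mulVecE pstarᵀ (ψ (x + e) - ψ x)‖ ≤ pbar * (Lphi * ‖e‖) := by
    refine (norm_mulVecE_le_opNorm _ _).trans ?_
    rw [opNorm_transpose]
    have hψ := hlip x (x + e)
    rw [add_sub_cancel_left] at hψ
    exact mul_le_mul hpstar hψ (norm_nonneg _) ((norm_nonneg _).trans hpstar)
  rw [hsplit]
  linarith [norm_add_le (mulVecE (p - pstar)ᵀ (ψ (x + e))) (mulVecE pstarᵀ (ψ (x + e) - ψ x))]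

lemma quadForm_succ_le {phibar Lphi pbar nubar : ℝ} (hn : 0 < n) (hP : P.PosDef)
    (hQ : Q.IsHermitian) (hLyap : (P - Mᵀ * P * M - Q).PosSemidef)
    (hphibar : 0 < phibar) (hLphi : 0 < Lphi) (hpbar : 0 < pbar)
    (hgain : 4 * pbar ^ 2 * Lphi ^ 2 * lamMax P + 8 * pbar * Lphi * frobNorm (P * M) ≤ lamMin Q)
    (ψ : EuclideanSpace ℝ (Fin n) → EuclideanSpace ℝ (Fin m))
    (hbdd : ∀ x, ‖ψ x‖ ≤ phibar) (hlip : ∀ x x', ‖ψ x' - ψ x‖ ≤ Lphi * ‖x' - x‖)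
    {pstar : Matrix (Fin m) (Fin n) ℝ} (hpstar : opNorm pstar ≤ pbar)
    (p : Matrix (Fin m) (Fin n) ℝ) (x e : EuclideanSpace ℝ (Fin n))
    (hcone : opNorm (p - pstar) ≤
      (lamMin Q / (8 * phibar * (lamMax P * Lphi * pbar + frobNorm (P * M)))) * ‖e‖)
    (hbound : opNorm (p - pstar) ≤ nubar) :
    quadForm P (mulVecE M e + mulVecE pᵀ (ψ (x + e)) - mulVecE pstarᵀ (ψ x))
      ≤ (1 - lamMin Q / (2 * lamMax P)) * quadForm P e + lamMax P * phibar ^ 2 * nubar ^ 2 := by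
  rw [add_sub_assoc]
  set d := mulVecE pᵀ (ψ (x + e)) - mulVecE pstarᵀ (ψ x)
  have hlamP : 0 < lamMax P :=
    (lamMin_pos hn hP).trans_le (lamMin_le_lamMax hn hP.isHermitian)
  have hlamQ : 0 ≤ lamMin Q := le_trans (by positivity [frobNorm_nonneg (P * M)]) hgain
  have hd := norm_disturbance_le ψ hbdd hlip hpstar p x e
  have hsmall := small_gain_bound hphibar
    (add_pos_of_pos_of_nonneg (by positivity) (frobNorm_nonneg (P * M))) hlamP.le
    (opNorm_nonneg _) (norm_nonneg e) hgain hcone hbound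
  have hmono : 2 * frobNorm (P * M) * ‖e‖ * ‖d‖ + lamMax P * ‖d‖ ^ 2
      ≤ 2 * frobNorm (P * M) * ‖e‖ * (phibar * opNorm (p - pstar) + pbar * Lphi * ‖e‖)
        + lamMax P * (phibar * opNorm (p - pstar) + pbar * Lphi * ‖e‖) ^ 2 := by
    have := frobNorm_nonneg (P * M)
    gcongr
  have hcontract : quadForm P e - lamMin Q / 2 * ‖e‖ ^ 2
      ≤ (1 - lamMin Q / (2 * lamMax P)) * quadForm P e := by
    have h := mul_le_mul_of_nonneg_left (quadForm_le_lamMax_mul hP.isHermitian e)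
      (by positivity : 0 ≤ lamMin Q / (2 * lamMax P))
    have hcancel : lamMin Q / (2 * lamMax P) * (lamMax P * ‖e‖ ^ 2) = lamMin Q / 2 * ‖e‖ ^ 2 := by
      field_simp
    linarith
  linarith [quadForm_mulVecE_add_le hP.isHermitian hQ hLyap e d]

end Lyapunov

theorem stmt_1_general {n m : ℕ} (hn : 0 < n)
    (M P Q : Matrix (Fin n) (Fin n) ℝ)
    (phibar Lphi pbar nubar : ℝ)
    (hphibar : 0 < phibar) (hLphi : 0 < Lphi) (hpbar : 0 < pbar) (hnubar : 0 ≤ nubar)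
    (hP : P.PosDef) (hQ : Q.PosDef)
    (hLyap : (P - Mᵀ * P * M - Q).PosSemidef)
    (hgain : 4 * pbar ^ 2 * Lphi ^ 2 * lamMax P + 8 * pbar * Lphi * frobNorm (P * M) ≤ lamMin Q)
    (ψ : EuclideanSpace ℝ (Fin n) → EuclideanSpace ℝ (Fin m))
    (hbdd : ∀ x, ‖ψ x‖ ≤ phibar)
    (hlip : ∀ x x', ‖ψ x' - ψ x‖ ≤ Lphi * ‖x' - x‖)
    (pstar : Matrix (Fin m) (Fin n) ℝ)
    (hpstar : opNorm pstar ≤ pbar)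
    (x e : ℕ → EuclideanSpace ℝ (Fin n))
    (p : ℕ → Matrix (Fin m) (Fin n) ℝ)
    (hdyn : ∀ t, e (t + 1) =
      mulVecE M (e t) + mulVecE (p t)ᵀ (ψ (x t + e t)) - mulVecE pstarᵀ (ψ (x t)))
    (hcone : ∀ t, opNorm (p t - pstar) ≤
      (lamMin Q / (8 * phibar * (lamMax P * Lphi * pbar + frobNorm (P * M)))) * ‖e t‖)
    (hbound : ∀ t, opNorm (p t - pstar) ≤ nubar) :
    ∀ t : ℕ, ‖e t‖ ≤
      Real.sqrt (lamMax P / lamMin P) * (1 - lamMin Q / (2 * lamMax P)) ^ ((t : ℝ) / 2) * ‖e 0‖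
        + phibar * nubar * Real.sqrt (2 * lamMax P ^ 2 / (lamMin Q * lamMin P)) := by
  have hlamp := lamMin_pos hn hP
  have hlamP := hlamp.trans_le (lamMin_le_lamMax hn hP.isHermitian)
  have hlamQ := lamMin_pos hn hQ
  have hQP := lamMin_le_lamMax_of_lyapunov hn hP.posSemidef hQ.isHermitian hLyap
  set ρ := 1 - lamMin Q / (2 * lamMax P)
  have hρ0 : 0 ≤ ρ := by
    rw [sub_nonneg, div_le_one (by positivity)]
    linarith
  have hρ1 : ρ < 1 := sub_lt_self _ (by positivity)
  have hV := le_pow_mul_add_div_of_le_mul_add (v := fun t => quadForm P (e t))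
    (c := lamMax P * phibar ^ 2 * nubar ^ 2) hρ0 hρ1 (by positivity) fun t => hdyn t ▸
    quadForm_succ_le hn hP hQ.isHermitian hLyap hphibar hLphi hpbar hgain ψ hbdd hlip hpstar
      (p t) (x t) (e t) (hcone t) (hbound t)
  intro t
  set K := lamMax P * phibar ^ 2 * nubar ^ 2 / (1 - ρ)
  have hsandwich : lamMin P * ‖e t‖ ^ 2 ≤ ρ ^ t * (lamMax P * ‖e 0‖ ^ 2) + K :=
    calc lamMin P * ‖e t‖ ^ 2 ≤ quadForm P (e t) := lamMin_mul_le_quadForm hP.isHermitian (e t)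
      _ ≤ ρ ^ t * quadForm P (e 0) + K := hV t
      _ ≤ ρ ^ t * (lamMax P * ‖e 0‖ ^ 2) + K := by
        gcongr
        exact quadForm_le_lamMax_mul hP.isHermitian (e 0)
  have hK : K / lamMin P = (phibar * nubar) ^ 2 * (2 * lamMax P ^ 2 / (lamMin Q * lamMin P)) := by
    simp only [K, ρ, sub_sub_cancel]
    field_simp
  have h := le_sqrt_div_mul_rpow_mul_add_sqrt (norm_nonneg (e 0)) hlamp hlamP.le hρ0
    (by positivity) t hsandwich
  rwa [hK, Real.sqrt_mul (by positivity), Real.sqrt_sq (by positivity)] at h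

/-- L-ISS conclusion of Theorem 1 in explicit exponential form. -/
theorem stmt_1 {n m : ℕ} (hn : 0 < n) (hm : 0 < m)
    (M P Q : Matrix (Fin n) (Fin n) ℝ)
    (phibar Lphi pbar nubar : ℝ)
    (hphibar : 0 < phibar) (hLphi : 0 < Lphi) (hpbar : 0 < pbar) (hnubar : 0 ≤ nubar)
    (hP : P.PosDef) (hQ : Q.PosDef)
    (hLyap : (P - Mᵀ * P * M - Q).PosSemidef)
    (hgain : 4 * pbar ^ 2 * Lphi ^ 2 * lamMax P + 8 * pbar * Lphi * frobNorm (P * M) ≤ lamMin Q)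
    (ψ : EuclideanSpace ℝ (Fin n) → EuclideanSpace ℝ (Fin m))
    (hbdd : ∀ x, ‖ψ x‖ ≤ phibar)
    (hlip : ∀ x x', ‖ψ x' - ψ x‖ ≤ Lphi * ‖x' - x‖)
    (pstar : Matrix (Fin m) (Fin n) ℝ)
    (hpstar : opNorm pstar ≤ pbar)
    (x e : ℕ → EuclideanSpace ℝ (Fin n))
    (p : ℕ → Matrix (Fin m) (Fin n) ℝ)
    (hdyn : ∀ t, e (t + 1) =
      mulVecE M (e t) + mulVecE (p t)ᵀ (ψ (x t + e t)) - mulVecE pstarᵀ (ψ (x t)))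
    (hcone : ∀ t, opNorm (p t - pstar) ≤
      (lamMin Q / (8 * phibar * (lamMax P * Lphi * pbar + frobNorm (P * M)))) * ‖e t‖)
    (hbound : ∀ t, opNorm (p t - pstar) ≤ nubar) :
    ∀ t : ℕ, ‖e t‖ ≤
      Real.sqrt (lamMax P / lamMin P) * (1 - lamMin Q / (2 * lamMax P)) ^ ((t : ℝ) / 2) * ‖e 0‖
        + phibar * nubar * Real.sqrt (2 * lamMax P ^ 2 / (lamMin Q * lamMin P)) :=
  stmt_1_general hn M P Q phibar Lphi pbar nubar hphibar hLphi hpbar hnubar hP hQ hLyap hgain ψ hbdd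
    hlip pstar hpstar x e p hdyn hcone hbound
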